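/- Let σ², α, γ² : ℝ → ℝ be C^∞ functions such that for every k ≥ 0 there is a constant M_k < ∞ with |（σ²)^{(i)}(y)| ≤ M_k(1+|y|), |α^{(i)}(y)| ≤ M_k(1+|y|) and |(γ²)^{(i)}(y)| ≤ M_k(1+|y|) for all 0 ≤ i ≤ k and all y ∈ ℝ. Let B_j^k be defined by the recursion in the context. Then for every n ≥ 0, every 0 ≤ j ≤ n, and every i ≥ 0, there exist a constant M < ∞ and a nonnegative integer r such that |(B_j^n)^{(i)}(y)| ≤ M (1 + |y|)^r for all y ∈ ℝ. -/

import Mathlib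

noncomputable section

/-- The one-dimensional operator `ℒ₂ h = (γ²/2) h'' + α h'`. -/
def op2 (α γ2 : ℝ → ℝ) (h : ℝ → ℝ) : ℝ → ℝ :=
  fun y => γ2 y / 2 * iteratedDeriv 2 h y + α y * deriv h y

/-- The coefficient functions `B_j^k` (`Bcoef σ2 α γ2 k j = B_j^k`). -/
def Bcoef (σ2 α γ2 : ℝ → ℝ) : ℕ → ℕ → ℝ → ℝ
  | 0, 0 => fun _ => 1
  | 0, _ + 1 => fun _ => 0
  | k + 1, j =>
    if 1 ≤ j ∧ j ≤ k + 1 then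
      fun y => op2 α γ2 (Bcoef σ2 α γ2 k j) y + σ2 y / 2 * Bcoef σ2 α γ2 k (j - 1) y
    else fun _ => 0

end

namespace BcoefAux

/-- Polynomial growth. -/
def PG (f : ℝ → ℝ) : Prop := ∃ M : ℝ, ∃ r : ℕ, ∀ y : ℝ, |f y| ≤ M * (1 + |y|) ^ r

lemma one_le_base (y : ℝ) : (1 : ℝ) ≤ 1 + |y| := le_add_of_nonneg_right (abs_nonneg y)

lemma base_pow_mono {r s : ℕ} (h : r ≤ s) (y : ℝ) : (1 + |y|) ^ r ≤ (1 + |y|) ^ s :=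
  pow_le_pow_right₀ (one_le_base y) h

lemma PG.nonneg {f : ℝ → ℝ} {M : ℝ} {r : ℕ} (h : ∀ y : ℝ, |f y| ≤ M * (1 + |y|) ^ r) :
    0 ≤ M := by
  have := h 0
  simp only [abs_zero, add_zero, one_pow, mul_one] at this
  linarith [abs_nonneg (f 0)]

lemma PG.mono {f g : ℝ → ℝ} (h : ∀ y, |f y| ≤ |g y|) (hg : PG g) : PG f := by
  obtain ⟨M, r, hM⟩ := hg
  exact ⟨M, r, fun y => (h y).trans (hM y)⟩

lemma PG.const (c : ℝ) : PG (fun _ => c) := ⟨|c|, 0, fun y => by simp⟩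

lemma PG.add {f g : ℝ → ℝ} (hf : PG f) (hg : PG g) : PG (fun y => f y + g y) := by
  obtain ⟨M1, r1, h1⟩ := hf
  obtain ⟨M2, r2, h2⟩ := hg
  refine ⟨M1 + M2, max r1 r2, fun y => ?_⟩
  have b1 := base_pow_mono (le_max_left r1 r2) y
  have b2 := base_pow_mono (le_max_right r1 r2) y
  calc |f y + g y| ≤ |f y| + |g y| := abs_add_le _ _
    _ ≤ M1 * (1 + |y|) ^ r1 + M2 * (1 + |y|) ^ r2 := add_le_add (h1 y) (h2 y)
    _ ≤ M1 * (1 + |y|) ^ max r1 r2 + M2 * (1 + |y|) ^ max r1 r2 := by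
        gcongr <;> [exact PG.nonneg h1; exact PG.nonneg h2]
    _ = (M1 + M2) * (1 + |y|) ^ max r1 r2 := by ring

lemma PG.mul {f g : ℝ → ℝ} (hf : PG f) (hg : PG g) : PG (fun y => f y * g y) := by
  obtain ⟨M1, r1, h1⟩ := hf
  obtain ⟨M2, r2, h2⟩ := hg
  refine ⟨M1 * M2, r1 + r2, fun y => ?_⟩
  have := mul_le_mul (h1 y) (h2 y) (abs_nonneg _)
    (mul_nonneg (PG.nonneg h1) (by positivity))
  calc |f y * g y| = |f y| * |g y| := abs_mul _ _
    _ ≤ (M1 * (1 + |y|) ^ r1) * (M2 * (1 + |y|) ^ r2) := this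
    _ = M1 * M2 * (1 + |y|) ^ (r1 + r2) := by rw [pow_add]; ring

lemma PG.sum {m : ℕ} {F : ℕ → ℝ → ℝ} (h : ∀ i < m, PG (F i)) :
    PG (fun y => ∑ i ∈ Finset.range m, F i y) := by
  induction m with
  | zero => simpa using PG.const 0
  | succ m ih =>
    have : PG (fun y => (∑ i ∈ Finset.range m, F i y) + F m y) :=
      PG.add (ih fun i hi => h i (hi.trans (Nat.lt_succ_self m))) (h m (Nat.lt_succ_self m))
    simpa [Finset.sum_range_succ] using this

/-- Smooth with all iterated derivatives of polynomial growth. -/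
def Good (f : ℝ → ℝ) : Prop :=
  ContDiff ℝ (⊤ : ℕ∞) f ∧ ∀ i : ℕ, PG (iteratedDeriv i f)

lemma Good.const (c : ℝ) : Good (fun _ => c) := by
  refine ⟨contDiff_const, fun i => ?_⟩
  cases i with
  | zero => simpa using PG.const c
  | succ n =>
    have : iteratedDeriv (n + 1) (fun _ : ℝ => c) = fun _ => (0 : ℝ) := by
      rw [iteratedDeriv_succ']
      simp only [deriv_const']
      induction n with
      | zero => simp
      | succ m ih => rw [iteratedDeriv_succ', show deriv (fun _ : ℝ => (0:ℝ)) = fun _ => (0:ℝ) by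
          funext x; simp]; exact ih
    rw [this]
    exact PG.const 0

lemma Good.deriv {f : ℝ → ℝ} (hf : Good f) : Good (deriv f) := by
  refine ⟨(contDiff_infty_iff_deriv.mp hf.1).2, fun i => ?_⟩
  rw [← iteratedDeriv_succ']
  exact hf.2 (i + 1)

lemma Good.add {f g : ℝ → ℝ} (hf : Good f) (hg : Good g) : Good (fun y => f y + g y) := by
  refine ⟨hf.1.add hg.1, fun i => ?_⟩
  have heq : ∀ y : ℝ, iteratedDeriv i (fun y => f y + g y) y
      = iteratedDeriv i f y + iteratedDeriv i g y := by
    intro y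
    have : (fun y => f y + g y) = f + g := rfl
    rw [this]
    simp only [← iteratedDerivWithin_univ]
    exact iteratedDerivWithin_add (Set.mem_univ y) uniqueDiffOn_univ
      (hf.1.of_le (by exact_mod_cast (le_top : (i : ℕ∞) ≤ ⊤))).contDiffWithinAt (hg.1.of_le (by exact_mod_cast (le_top : (i : ℕ∞) ≤ ⊤))).contDiffWithinAt
  have : PG (fun y => iteratedDeriv i f y + iteratedDeriv i g y) :=
    PG.add (hf.2 i) (hg.2 i)
  exact PG.mono (fun y => by rw [heq y]) this

lemma Good.mul {f g : ℝ → ℝ} (hf : Good f) (hg : Good g) : Good (fun y => f y * g y) := by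
  refine ⟨hf.1.mul hg.1, fun n => ?_⟩
  set F : ℕ → ℝ → ℝ := fun i y =>
    (n.choose i : ℝ) * |iteratedDeriv i f y| * |iteratedDeriv (n - i) g y| with hF
  have hPGF : ∀ i < n + 1, PG (F i) := by
    intro i _
    exact PG.mul (PG.mul (PG.const _) (PG.mono (fun y => by rw [abs_abs]) (hf.2 i)))
      (PG.mono (fun y => by rw [abs_abs]) (hg.2 (n - i)))
  have hsum : PG (fun y => ∑ i ∈ Finset.range (n + 1), F i y) := PG.sum hPGF
  refine PG.mono (fun y => ?_) hsum
  have hb := norm_iteratedFDeriv_mul_le (𝕜 := ℝ) (hf.1.of_le (le_refl _)) (hg.1.of_le (le_refl _)) y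
    (by exact_mod_cast le_top : (n : WithTop ℕ∞) ≤ ((⊤ : ℕ∞) : WithTop ℕ∞))
  simp only [norm_iteratedFDeriv_eq_norm_iteratedDeriv, Real.norm_eq_abs] at hb
  have hnonneg : 0 ≤ ∑ i ∈ Finset.range (n + 1), F i y :=
    Finset.sum_nonneg fun i _ => by positivity
  calc |iteratedDeriv n (fun y => f y * g y) y|
      ≤ ∑ i ∈ Finset.range (n + 1), F i y := hb
    _ ≤ |∑ i ∈ Finset.range (n + 1), F i y| := le_abs_self _
    _ = |(fun y => ∑ i ∈ Finset.range (n + 1), F i y) y| := rfl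

lemma Good.iterDeriv {f : ℝ → ℝ} (hf : Good f) (k : ℕ) : Good (iteratedDeriv k f) := by
  induction k with
  | zero => simpa using hf
  | succ m ih => rw [iteratedDeriv_succ]; exact ih.deriv

lemma Good.op2 {α γ2 h : ℝ → ℝ} (hα : Good α) (hγ2 : Good γ2) (hh : Good h) :
    Good (op2 α γ2 h) := by
  have h2 : Good (iteratedDeriv 2 h) := hh.iterDeriv 2
  have h1 : Good (_root_.deriv h) := hh.deriv
  have hγ2' : Good (fun y => γ2 y / 2) := by
    have h' := hγ2.mul (Good.const (1 / 2))
    have e : (fun y => γ2 y * (1 / 2)) = fun y => γ2 y / 2 := by funext y; ring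
    rwa [e] at h'
  exact Good.add (hγ2'.mul h2) (hα.mul h1)

end BcoefAux

open BcoefAux in
/-- If `σ²`, `α`, `γ²` are `C^∞` with all derivatives growing at most linearly, then
every derivative of every coefficient `B_j^n` has at most polynomial growth. -/
theorem Bcoef_derivatives_polynomial_growth
    (σ2 α γ2 : ℝ → ℝ) (hσ2 : ContDiff ℝ (⊤ : ℕ∞) σ2) (hα : ContDiff ℝ (⊤ : ℕ∞) α) (hγ2 : ContDiff ℝ (⊤ : ℕ∞) γ2)
    (hgrowth : ∀ k : ℕ, ∃ M : ℝ, ∀ i ≤ k, ∀ y : ℝ,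
      |iteratedDeriv i σ2 y| ≤ M * (1 + |y|) ∧
      |iteratedDeriv i α y| ≤ M * (1 + |y|) ∧
      |iteratedDeriv i γ2 y| ≤ M * (1 + |y|)) :
    ∀ n : ℕ, ∀ j ≤ n, ∀ i : ℕ, ∃ M : ℝ, ∃ r : ℕ, ∀ y : ℝ,
      |iteratedDeriv i (Bcoef σ2 α γ2 n j) y| ≤ M * (1 + |y|) ^ r := by
  have hGσ2 : Good σ2 := by
    refine ⟨hσ2.of_le (by simp), fun i => ?_⟩
    obtain ⟨M, hM⟩ := hgrowth i
    exact ⟨M, 1, fun y => by simpa using (hM i le_rfl y).1⟩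
  have hGα : Good α := by
    refine ⟨hα.of_le (by simp), fun i => ?_⟩
    obtain ⟨M, hM⟩ := hgrowth i
    exact ⟨M, 1, fun y => by simpa using (hM i le_rfl y).2.1⟩
  have hGγ2 : Good γ2 := by
    refine ⟨hγ2.of_le (by simp), fun i => ?_⟩
    obtain ⟨M, hM⟩ := hgrowth i
    exact ⟨M, 1, fun y => by simpa using (hM i le_rfl y).2.2⟩
  have hGσ2' : Good (fun y => σ2 y / 2) := by
    have h := hGσ2.mul (Good.const (1 / 2))
    have e : (fun y => σ2 y * (1 / 2)) = fun y => σ2 y / 2 := by funext y; ring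
    rwa [e] at h
  have key : ∀ k : ℕ, ∀ j : ℕ, Good (Bcoef σ2 α γ2 k j) := by
    intro k
    induction k with
    | zero =>
      intro j
      cases j with
      | zero => exact Good.const 1
      | succ m => exact Good.const 0
    | succ k ih =>
      intro j
      show Good (Bcoef σ2 α γ2 (k + 1) j)
      rw [Bcoef]
      split_ifs with hc
      · exact Good.add (Good.op2 hGα hGγ2 (ih j)) (hGσ2'.mul (ih (j - 1)))
      · exact Good.const 0
  intro n j _ i
  exact (key n j).2 i
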